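/- arXiv:2211.12633 — 2 statements merged into one kernel-verified Lean document; each statement's English description precedes it below -/
import Mathlib

section
/- Let V be a real Banach space, W ⊆ V a closed subspace, m, N ∈ ℕ, w = (w_j)_{j=1}^N positive weights and k > 0. Suppose the matrix A ∈ ℝ^{m×N}, regarded as an operator W^N → W^m, has the weighted robust null space property over W of order (k,w) with constants 0 ≤ ρ < 1 and γ > 0. Let x ∈ W^N, f ∈ V^m, e := A x − f, and let 0 < λ ≤ (1+ρ)²/((3+ρ)γ√k). Define G(z) := λ‖z‖_{1,w;V} + ‖A z − f‖_{2;V} for z ∈ W^N. Then for every x̃ ∈ W^N, ‖x̃ − x‖_{1,w;V} ≤ C₁·(2σ_k(x)_{1,w;V} + (G(x̃) − G(x))/λ) + (C₁/λ + C₂√k)·‖e‖_{2;V}, where C₁ = (1+ρ)/(1−ρ) and C₂ = 2γ/(1−ρ). -/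
open Finset

/-- The ℓ²-norm `‖x‖_{2;V}` of a tuple `x ∈ V^N`. -/
noncomputable def norm2V {V : Type*} [NormedAddCommGroup V] {N : ℕ} (x : Fin N → V) : ℝ :=
  Real.sqrt (∑ j, ‖x j‖ ^ 2)

/-- The weighted ℓ¹-norm `‖x‖_{1,w;V}` of a tuple `x ∈ V^N`. -/
noncomputable def norm1wV {V : Type*} [NormedAddCommGroup V] {N : ℕ} (w : Fin N → ℝ)
    (x : Fin N → V) : ℝ :=
  ∑ j, w j * ‖x j‖

/-- The action of a matrix `A ∈ ℝ^{m×N}` on `V^N`, giving an element of `V^m`. -/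
noncomputable def matVec {V : Type*} [NormedAddCommGroup V] [NormedSpace ℝ V] {m N : ℕ}
    (A : Matrix (Fin m) (Fin N) ℝ) (x : Fin N → V) : Fin m → V :=
  fun i => ∑ j, A i j • x j

/-- `x_S`: the vector agreeing with `x` on `S` and vanishing outside `S`. -/
noncomputable def restrictTo {V : Type*} [NormedAddCommGroup V] {N : ℕ} (x : Fin N → V)
    (S : Finset (Fin N)) : Fin N → V :=
  fun j => if j ∈ S then x j else 0

/-- The weighted cardinality `|S|_w = Σ_{j∈S} w_j²`. -/
def wCard {N : ℕ} (w : Fin N → ℝ) (S : Finset (Fin N)) : ℝ :=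
  ∑ j ∈ S, w j ^ 2

/-- `A` has the weighted robust null space property over the subset `W ⊆ V`
of order `(k, w)` with constants `ρ` and `γ`. -/
def WRNSP {V : Type*} [NormedAddCommGroup V] [NormedSpace ℝ V] {m N : ℕ}
    (A : Matrix (Fin m) (Fin N) ℝ) (W : Set V) (k : ℝ) (w : Fin N → ℝ) (ρ γ : ℝ) : Prop :=
  ∀ x : Fin N → V, (∀ j, x j ∈ W) → ∀ S : Finset (Fin N), wCard w S ≤ k →
    norm2V (restrictTo x S) ≤
      ρ / Real.sqrt k * norm1wV w (restrictTo x Sᶜ) + γ * norm2V (matVec A x)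

/-- The weighted best `(k,w)`-term approximation error `σ_k(x)_{1,w;V}`. -/
noncomputable def sigmaK {V : Type*} [NormedAddCommGroup V] {N : ℕ} (w : Fin N → ℝ) (k : ℝ)
    (x : Fin N → V) : ℝ :=
  sInf {t : ℝ | ∃ S : Finset (Fin N), wCard w S ≤ k ∧ t = norm1wV w (restrictTo x Sᶜ)}

/-!
With `v = x̃ - x` and `S` a set realising `σ_k(x)`, Cauchy–Schwarz turns the wrNSP into the
`ℓ¹_w`-estimate `‖v_S‖ ≤ ρ ‖v_{Sᶜ}‖ + γ√k ‖A v‖`, while the triangle inequality gives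
`‖v_{Sᶜ}‖ ≤ ‖x̃‖ - ‖x‖ + 2 σ_k(x) + ‖v_S‖`. Together they yield
`(1 - ρ) ‖v‖ ≤ (1 + ρ) (‖x̃‖ - ‖x‖ + 2 σ_k(x)) + 2γ√k ‖A v‖`, and
`‖A v‖ ≤ ‖A x̃ - f‖ + ‖e‖`. The bound on `λ` gives `2γ√k ≤ (1 + ρ)/λ`, which lets the residual
`‖A x̃ - f‖` be absorbed into `(G(x̃) - G(x))/λ`.
-/

section Norms

variable {V : Type*} [NormedAddCommGroup V] {N : ℕ}

theorem norm2V_eq_norm_toLp (y : Fin N → V) :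
    norm2V y = ‖WithLp.toLp 2 y‖ :=
  (PiLp.norm_eq_of_L2 _).symm

theorem norm2V_sub_le (y z : Fin N → V) : norm2V (y - z) ≤ norm2V y + norm2V z := by
  simpa only [norm2V_eq_norm_toLp, WithLp.toLp_sub] using norm_sub_le _ _

theorem norm1wV_restrictTo (w : Fin N → ℝ) (y : Fin N → V) (S : Finset (Fin N)) :
    norm1wV w (restrictTo y S) = ∑ j ∈ S, w j * ‖y j‖ := by
  simp only [norm1wV, restrictTo, apply_ite, norm_zero, mul_zero, sum_ite_mem, univ_inter]

theorem norm2V_restrictTo (y : Fin N → V) (S : Finset (Fin N)) :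
    norm2V (restrictTo y S) = Real.sqrt (∑ j ∈ S, ‖y j‖ ^ 2) := by
  simp [norm2V, restrictTo, apply_ite]

theorem norm1wV_restrictTo_add_compl (w : Fin N → ℝ) (y : Fin N → V) (S : Finset (Fin N)) :
    norm1wV w (restrictTo y S) + norm1wV w (restrictTo y Sᶜ) = norm1wV w y := by
  rw [norm1wV_restrictTo, norm1wV_restrictTo, sum_add_sum_compl, norm1wV]

theorem norm1wV_restrictTo_le_sqrt_wCard_mul (w : Fin N → ℝ) (y : Fin N → V)
    (S : Finset (Fin N)) :
    norm1wV w (restrictTo y S) ≤ Real.sqrt (wCard w S) * norm2V (restrictTo y S) := by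
  rw [norm1wV_restrictTo, norm2V_restrictTo]
  exact Real.sum_mul_le_sqrt_mul_sqrt S w fun j => ‖y j‖

theorem norm1wV_restrictTo_compl_sub_le {w : Fin N → ℝ} (hw : ∀ j, 0 ≤ w j)
    (z x : Fin N → V) (S : Finset (Fin N)) :
    norm1wV w (restrictTo (z - x) Sᶜ) ≤
      norm1wV w z - norm1wV w x + 2 * norm1wV w (restrictTo x Sᶜ)
        + norm1wV w (restrictTo (z - x) S) := by
  simp only [norm1wV, mul_sum, ← sum_sub_distrib, ← sum_add_distrib]
  refine sum_le_sum fun j _ => ?_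
  have hxz : ‖x j‖ ≤ ‖z j‖ + ‖z j - x j‖ := norm_le_norm_add_norm_sub (z j) (x j)
  have hzx : ‖z j - x j‖ ≤ ‖z j‖ + ‖x j‖ := norm_sub_le _ _
  by_cases hj : j ∈ S <;>
    simp only [restrictTo, mem_compl, hj, if_true, if_false, not_true_eq_false,
      not_false_eq_true, Pi.sub_apply, norm_zero] <;>
    nlinarith [hw j]

end Norms

theorem matVec_sub {V : Type*} [NormedAddCommGroup V] [NormedSpace ℝ V] {m N : ℕ}
    (A : Matrix (Fin m) (Fin N) ℝ) (y z : Fin N → V) :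
    matVec A (y - z) = matVec A y - matVec A z := by
  funext i
  simp only [matVec, Pi.sub_apply, smul_sub, sum_sub_distrib]

theorem exists_sigmaK_eq {V : Type*} [NormedAddCommGroup V] {N : ℕ} (w : Fin N → ℝ) {k : ℝ}
    (hk : 0 ≤ k) (x : Fin N → V) :
    ∃ S : Finset (Fin N), wCard w S ≤ k ∧ norm1wV w (restrictTo x Sᶜ) = sigmaK w k x := by
  have hne : {t : ℝ | ∃ S : Finset (Fin N), wCard w S ≤ k ∧
      t = norm1wV w (restrictTo x Sᶜ)}.Nonempty := ⟨_, ∅, by simpa [wCard] using hk, rfl⟩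
  have hfin : {t : ℝ | ∃ S : Finset (Fin N), wCard w S ≤ k ∧
      t = norm1wV w (restrictTo x Sᶜ)}.Finite :=
    (Set.finite_range fun S : Finset (Fin N) => norm1wV w (restrictTo x Sᶜ)).subset
      fun _ ⟨S, _, ht⟩ => ⟨S, ht.symm⟩
  obtain ⟨S, hS, hσ⟩ := hne.csInf_mem hfin
  exact ⟨S, hS, hσ.symm⟩

namespace WRNSP

variable {V : Type*} [NormedAddCommGroup V] [NormedSpace ℝ V] {m N : ℕ}
  {A : Matrix (Fin m) (Fin N) ℝ} {k : ℝ} {w : Fin N → ℝ} {ρ γ : ℝ}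

theorem norm1wV_restrictTo_le {W : Set V} (hA : WRNSP A W k w ρ γ) (hk : 0 < k)
    {y : Fin N → V} (hy : ∀ j, y j ∈ W) {S : Finset (Fin N)} (hS : wCard w S ≤ k) :
    norm1wV w (restrictTo y S) ≤
      ρ * norm1wV w (restrictTo y Sᶜ) + γ * Real.sqrt k * norm2V (matVec A y) := by
  have hsqrt : 0 < Real.sqrt k := Real.sqrt_pos.mpr hk
  calc norm1wV w (restrictTo y S)
      ≤ Real.sqrt (wCard w S) * norm2V (restrictTo y S) :=
        norm1wV_restrictTo_le_sqrt_wCard_mul w y S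
    _ ≤ Real.sqrt k * norm2V (restrictTo y S) := by
        gcongr
        exact Real.sqrt_nonneg _
    _ ≤ Real.sqrt k * (ρ / Real.sqrt k * norm1wV w (restrictTo y Sᶜ)
          + γ * norm2V (matVec A y)) := by
        gcongr
        exact hA y hy S hS
    _ = ρ * norm1wV w (restrictTo y Sᶜ) + γ * Real.sqrt k * norm2V (matVec A y) := by
        field_simp

theorem one_sub_mul_norm1wV_sub_le {W : Submodule ℝ V} (hA : WRNSP A (W : Set V) k w ρ γ)
    (hk : 0 < k) (hw : ∀ j, 0 ≤ w j) (hρ : -1 ≤ ρ) {z x : Fin N → V}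
    (hz : ∀ j, z j ∈ W) (hx : ∀ j, x j ∈ W)
    {S : Finset (Fin N)} (hS : wCard w S ≤ k) :
    (1 - ρ) * norm1wV w (z - x) ≤
      (1 + ρ) * (norm1wV w z - norm1wV w x + 2 * norm1wV w (restrictTo x Sᶜ))
        + 2 * (γ * Real.sqrt k * norm2V (matVec A (z - x))) := by
  have hon := hA.norm1wV_restrictTo_le hk (y := z - x) (fun j => W.sub_mem (hz j) (hx j)) hS
  have hoff := norm1wV_restrictTo_compl_sub_le hw z x S
  rw [← norm1wV_restrictTo_add_compl w (z - x) S]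
  linarith [mul_le_mul_of_nonneg_left hoff (by linarith : (0 : ℝ) ≤ 1 + ρ)]

end WRNSP

theorem wrNSP_error_bound_l1w_general
    {V : Type*} [NormedAddCommGroup V] [NormedSpace ℝ V]
    (W : Subspace ℝ V)
    {m N : ℕ} (A : Matrix (Fin m) (Fin N) ℝ)
    (w : Fin N → ℝ) (hw : ∀ j, 0 < w j)
    (k : ℝ) (hk : 0 < k)
    (ρ γ : ℝ) (hρ0 : 0 ≤ ρ) (hρ1 : ρ < 1) (hγ : 0 < γ)
    (hA : WRNSP A (W : Set V) k w ρ γ)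
    (x : Fin N → V) (hx : ∀ j, x j ∈ W)
    (f : Fin m → V)
    (e : Fin m → V) (he : e = fun i => matVec A x i - f i)
    (lam : ℝ) (hlam0 : 0 < lam)
    (hlam : lam ≤ (1 + ρ) ^ 2 / ((3 + ρ) * γ * Real.sqrt k))
    (G : (Fin N → V) → ℝ)
    (hG : ∀ z, G z = lam * norm1wV w z + norm2V (fun i => matVec A z i - f i))
    (xt : Fin N → V) (hxt : ∀ j, xt j ∈ W) :
    norm1wV w (fun j => xt j - x j) ≤
      (1 + ρ) / (1 - ρ) * (2 * sigmaK w k x + (G xt - G x) / lam)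
        + ((1 + ρ) / (1 - ρ) / lam + 2 * γ / (1 - ρ) * Real.sqrt k) * norm2V e := by
  obtain ⟨S, hS, hσ⟩ := exists_sigmaK_eq w hk.le x
  have hmain := hA.one_sub_mul_norm1wV_sub_le hk (fun j => (hw j).le) (by linarith) hxt hx hS
  have hresidual : norm2V (matVec A (xt - x)) ≤
      norm2V (fun i => matVec A xt i - f i) + norm2V e := by
    have h := norm2V_sub_le (matVec A xt - f) (matVec A x - f)
    rw [sub_sub_sub_cancel_right, ← matVec_sub] at h
    rwa [he]
  have hGx : G x = lam * norm1wV w x + norm2V e := by rw [hG, he]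
  have hsqrt : 0 < Real.sqrt k := Real.sqrt_pos.mpr hk
  have hlam' : 2 * (γ * Real.sqrt k) ≤ (1 + ρ) / lam := by
    rw [le_div_iff₀ hlam0]
    rw [le_div_iff₀ (by positivity)] at hlam
    nlinarith
  have hrhs : (1 + ρ) / (1 - ρ) * (2 * sigmaK w k x + (G xt - G x) / lam)
        + ((1 + ρ) / (1 - ρ) / lam + 2 * γ / (1 - ρ) * Real.sqrt k) * norm2V e
      = ((1 + ρ) * (norm1wV w xt - norm1wV w x + 2 * sigmaK w k x)
        + (1 + ρ) / lam * norm2V (fun i => matVec A xt i - f i)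
        + 2 * (γ * Real.sqrt k) * norm2V e) / (1 - ρ) := by
    rw [hG, hGx]
    field_simp
    ring
  change norm1wV w (xt - x) ≤ _
  rw [hrhs, le_div_iff₀' (by linarith), ← hσ]
  have hres0 : 0 ≤ norm2V (fun i => matVec A xt i - f i) := Real.sqrt_nonneg _
  linarith [mul_le_mul_of_nonneg_left hresidual (by positivity : 0 ≤ 2 * (γ * Real.sqrt k)),
    mul_le_mul_of_nonneg_right hlam' hres0]

/-- Lemma 6.1 (weighted rNSP implies error bounds for inexact minimizers), `ℓ¹_w`-bound. -/
theorem wrNSP_error_bound_l1w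
    {V : Type*} [NormedAddCommGroup V] [NormedSpace ℝ V] [CompleteSpace V]
    (W : Subspace ℝ V) (hWclosed : IsClosed (W : Set V))
    {m N : ℕ} (A : Matrix (Fin m) (Fin N) ℝ)
    (w : Fin N → ℝ) (hw : ∀ j, 0 < w j)
    (k : ℝ) (hk : 0 < k)
    (ρ γ : ℝ) (hρ0 : 0 ≤ ρ) (hρ1 : ρ < 1) (hγ : 0 < γ)
    (hA : WRNSP A (W : Set V) k w ρ γ)
    (x : Fin N → V) (hx : ∀ j, x j ∈ W)
    (f : Fin m → V)
    (e : Fin m → V) (he : e = fun i => matVec A x i - f i)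
    (lam : ℝ) (hlam0 : 0 < lam)
    (hlam : lam ≤ (1 + ρ) ^ 2 / ((3 + ρ) * γ * Real.sqrt k))
    (G : (Fin N → V) → ℝ)
    (hG : ∀ z, G z = lam * norm1wV w z + norm2V (fun i => matVec A z i - f i))
    (xt : Fin N → V) (hxt : ∀ j, xt j ∈ W) :
    norm1wV w (fun j => xt j - x j) ≤
      (1 + ρ) / (1 - ρ) * (2 * sigmaK w k x + (G xt - G x) / lam)
        + ((1 + ρ) / (1 - ρ) / lam + 2 * γ / (1 - ρ) * Real.sqrt k) * norm2V e :=
  wrNSP_error_bound_l1w_general W A w hw k hk ρ γ hρ0 hρ1 hγ hA x hx f e he lam hlam0 hlam G hG xt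
    hxt
end

section
/- Let V be a real Banach space, m, N ∈ ℕ, w = (w_j)_{j=1}^N positive weights and k > 0. Suppose A ∈ ℝ^{m×N} has the weighted robust null space property over ℝ of order (k,w) with constants ρ ≥ 0 and γ ≥ 0, and set s* := max{ |S| : S ⊆ {1,…,N}, |S|_w ≤ k }. Then the induced operator A : V^N → V^m satisfies, for every v ∈ V^N and every S ⊆ {1,…,N} with |S|_w ≤ k, ‖v_S‖_{2;V} ≤ (√(s*)·ρ/√k)·‖v_{S^c}‖_{1,w;V} + √(s*)·γ·‖A v‖_{2;V}; that is, A has the weighted robust null space property over V of order (k,w) with constants ρ′ = √(s*)·ρ and γ′ = √(s*)·γ. -/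
/-!
Fix `v ∈ V^N` and `S` with `|S|_w ≤ k`, and let `j₀ ∈ S` maximise `‖v_j‖_V` over `S`. Then
`‖v_S‖_{2;V} ≤ √|S| · ‖v_{j₀}‖_V`. A Hahn–Banach functional `g` of norm at most one with
`g(v_{j₀}) = ‖v_{j₀}‖_V` turns `v` into the real vector `x = g ∘ v` with `‖v_{j₀}‖_V ≤ ‖x_S‖₂`.
Since `g` is linear it commutes with `A`, and since `‖g‖ ≤ 1` it does not increase
`‖x_{Sᶜ}‖_{1,w}` or `‖A x‖₂`; the rNSP of `A` over `ℝ` applied to `x`, together with `|S| ≤ s*`,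
gives the claim.
-/

open Finset

section Norms

variable {V W : Type*} [NormedAddCommGroup V] [NormedAddCommGroup W] {N : ℕ}

lemma norm2V_le_of_forall_norm_le {x : Fin N → V} {y : Fin N → W} (h : ∀ j, ‖x j‖ ≤ ‖y j‖) :
    norm2V x ≤ norm2V y :=
  Real.sqrt_le_sqrt <| sum_le_sum fun j _ => pow_le_pow_left₀ (norm_nonneg _) (h j) 2

lemma norm1wV_le_of_forall_norm_le {w : Fin N → ℝ} (hw : ∀ j, 0 ≤ w j) {x : Fin N → V}
    {y : Fin N → W} (h : ∀ j, ‖x j‖ ≤ ‖y j‖) : norm1wV w x ≤ norm1wV w y :=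
  sum_le_sum fun j _ => mul_le_mul_of_nonneg_left (h j) (hw j)

lemma norm_le_norm2V_restrictTo (x : Fin N → V) {S : Finset (Fin N)} {j : Fin N} (hj : j ∈ S) :
    ‖x j‖ ≤ norm2V (restrictTo x S) := by
  have hsq : ‖x j‖ ^ 2 ≤ ∑ i, ‖restrictTo x S i‖ ^ 2 := by
    simpa [restrictTo, hj] using
      single_le_sum (f := fun i => ‖restrictTo x S i‖ ^ 2) (fun i _ => sq_nonneg _) (mem_univ j)
  exact Real.le_sqrt_of_sq_le hsq

lemma norm2V_restrictTo_le_sqrt_card_mul (x : Fin N → V) {S : Finset (Fin N)} {j₀ : Fin N}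
    (hj₀ : ∀ j ∈ S, ‖x j‖ ≤ ‖x j₀‖) :
    norm2V (restrictTo x S) ≤ Real.sqrt S.card * ‖x j₀‖ := by
  have hsum : ∑ j, ‖restrictTo x S j‖ ^ 2 ≤ S.card * ‖x j₀‖ ^ 2 :=
    calc ∑ j, ‖restrictTo x S j‖ ^ 2 = ∑ j ∈ S, ‖x j‖ ^ 2 := by
          simp only [restrictTo, apply_ite norm, norm_zero, ite_pow, zero_pow two_ne_zero,
            sum_ite_mem, univ_inter]
      _ ≤ ∑ _j ∈ S, ‖x j₀‖ ^ 2 :=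
          sum_le_sum fun j hj => pow_le_pow_left₀ (norm_nonneg _) (hj₀ j hj) 2
      _ = S.card * ‖x j₀‖ ^ 2 := by rw [sum_const, nsmul_eq_mul]
  calc norm2V (restrictTo x S) ≤ Real.sqrt (S.card * ‖x j₀‖ ^ 2) := Real.sqrt_le_sqrt hsum
    _ = Real.sqrt S.card * ‖x j₀‖ := by
        rw [Real.sqrt_mul (Nat.cast_nonneg _), Real.sqrt_sq (norm_nonneg _)]

end Norms

section Functionals

variable {V W : Type*} [NormedAddCommGroup V] [NormedSpace ℝ V]
  [NormedAddCommGroup W] [NormedSpace ℝ W] {m N : ℕ}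

lemma restrictTo_comp (g : V →L[ℝ] W) (x : Fin N → V) (S : Finset (Fin N)) :
    restrictTo (g ∘ x) S = g ∘ restrictTo x S := by
  ext j
  by_cases hj : j ∈ S <;> simp [restrictTo, hj]

lemma matVec_comp (A : Matrix (Fin m) (Fin N) ℝ) (g : V →L[ℝ] W) (x : Fin N → V) :
    matVec A (g ∘ x) = g ∘ matVec A x := by
  ext i
  simp [matVec, map_sum, map_smul]

lemma exists_dual_norm2V_restrictTo_le (x : Fin N → V) (S : Finset (Fin N)) :
    ∃ g : StrongDual ℝ V, ‖g‖ ≤ 1 ∧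
      norm2V (restrictTo x S) ≤ Real.sqrt S.card * norm2V (restrictTo (g ∘ x) S) := by
  rcases S.eq_empty_or_nonempty with rfl | hS
  · exact ⟨0, by simp, by simp [norm2V, restrictTo]⟩
  obtain ⟨j₀, hj₀S, hj₀⟩ := S.exists_max_image (fun j => ‖x j‖) hS
  obtain ⟨g, hg, hgx⟩ := exists_dual_vector'' ℝ (x j₀)
  have hnorm : ‖x j₀‖ ≤ norm2V (restrictTo (g ∘ x) S) :=
    calc ‖x j₀‖ = g (x j₀) := hgx.symm
      _ ≤ ‖(g ∘ x) j₀‖ := le_abs_self _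
      _ ≤ norm2V (restrictTo (g ∘ x) S) := norm_le_norm2V_restrictTo _ hj₀S
  exact ⟨g, hg, (norm2V_restrictTo_le_sqrt_card_mul x hj₀).trans <|
    mul_le_mul_of_nonneg_left hnorm (Real.sqrt_nonneg _)⟩

end Functionals

theorem wrNSP_real_to_banach_general
    {V : Type*} [NormedAddCommGroup V] [NormedSpace ℝ V]
    {m N : ℕ} (A : Matrix (Fin m) (Fin N) ℝ)
    (w : Fin N → ℝ) (hw : ∀ j, 0 < w j)
    (k : ℝ)
    (ρ γ : ℝ) (hρ : 0 ≤ ρ) (hγ : 0 ≤ γ)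
    (hA : WRNSP A (Set.univ : Set ℝ) k w ρ γ)
    (sStar : ℕ)
    (hsStar : IsGreatest {s : ℕ | ∃ S : Finset (Fin N), wCard w S ≤ k ∧ S.card = s} sStar) :
    WRNSP A (Set.univ : Set V) k w (Real.sqrt sStar * ρ) (Real.sqrt sStar * γ) := by
  intro v _ S hS
  obtain ⟨g, hg, hv⟩ := exists_dual_norm2V_restrictTo_le v S
  have hcard : (S.card : ℝ) ≤ sStar := by exact_mod_cast hsStar.2 ⟨S, hS, rfl⟩
  have hg_le (y : V) : ‖g y‖ ≤ ‖y‖ := by simpa using g.le_of_opNorm_le hg y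
  have hℓ1 : norm1wV w (restrictTo (g ∘ v) Sᶜ) ≤ norm1wV w (restrictTo v Sᶜ) := by
    rw [restrictTo_comp]
    exact norm1wV_le_of_forall_norm_le (fun j => (hw j).le) fun j => hg_le _
  have hmat : norm2V (matVec A (g ∘ v)) ≤ norm2V (matVec A v) := by
    rw [matVec_comp]
    exact norm2V_le_of_forall_norm_le fun i => hg_le _
  calc norm2V (restrictTo v S)
      ≤ Real.sqrt sStar * norm2V (restrictTo (g ∘ v) S) :=
        hv.trans <| mul_le_mul_of_nonneg_right (Real.sqrt_le_sqrt hcard) (Real.sqrt_nonneg _)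
    _ ≤ Real.sqrt sStar * (ρ / Real.sqrt k * norm1wV w (restrictTo (g ∘ v) Sᶜ) +
          γ * norm2V (matVec A (g ∘ v))) := by
        gcongr
        exact hA _ (fun _ => trivial) S hS
    _ ≤ Real.sqrt sStar * (ρ / Real.sqrt k * norm1wV w (restrictTo v Sᶜ) +
          γ * norm2V (matVec A v)) := by gcongr
    _ = Real.sqrt sStar * ρ / Real.sqrt k * norm1wV w (restrictTo v Sᶜ) +
          Real.sqrt sStar * γ * norm2V (matVec A v) := by ring

/-- Lemma 6.2: the weighted rNSP over `ℝ` implies the weighted rNSP over a Banach space `V`,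
with constants `ρ' = √(s*)·ρ` and `γ' = √(s*)·γ`, where
`s* = max{ |S| : S ⊆ [N], |S|_w ≤ k }`. -/
theorem wrNSP_real_to_banach
    {V : Type*} [NormedAddCommGroup V] [NormedSpace ℝ V] [CompleteSpace V]
    {m N : ℕ} (A : Matrix (Fin m) (Fin N) ℝ)
    (w : Fin N → ℝ) (hw : ∀ j, 0 < w j)
    (k : ℝ) (hk : 0 < k)
    (ρ γ : ℝ) (hρ : 0 ≤ ρ) (hγ : 0 ≤ γ)
    (hA : WRNSP A (Set.univ : Set ℝ) k w ρ γ)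
    (sStar : ℕ)
    (hsStar : IsGreatest {s : ℕ | ∃ S : Finset (Fin N), wCard w S ≤ k ∧ S.card = s} sStar) :
    WRNSP A (Set.univ : Set V) k w (Real.sqrt sStar * ρ) (Real.sqrt sStar * γ) :=
  wrNSP_real_to_banach_general A w hw k ρ γ hρ hγ hA sStar hsStar
end
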